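/- Let t be an ordered labeled tree and let v be a node of t with children v1, v2, …, vk (in sibling order, k ≥ 1). Then in XML(FCNS(t)) the closing tags of the children of v occupy consecutive positions in reverse sibling order: pos'(v̄i) = pos'(v̄(i+1)) + 1 for every 1 ≤ i ≤ k − 1, so that v̄k v̄(k−1) ⋯ v̄1 is a contiguous substring of XML(FCNS(t)). -/

import Mathlib

/-- Ordered labeled trees (rose trees). -/
inductive RTree (α : Type) : Type
  | node : α → List (RTree α) → RTree α

/-- Extended binary trees: every node has an optional left and right child. -/
inductive BTree (α : Type) : Type
  | nil : BTree α
  | node : α → BTree α → BTree α → BTree α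

namespace BTree

/-- Tag sequence of an extended binary tree: opening tag, left subtree,
right subtree, closing tag.  `false` = opening tag, `true` = closing tag. -/
def btags {α : Type} : BTree α → List (α × Bool)
  | .nil => []
  | .node a l r => (a, false) :: (btags l ++ btags r ++ [(a, true)])

end BTree

namespace RTree

variable {α : Type}

def label : RTree α → α
  | .node a _ => a

def childLabels : RTree α → List α
  | .node _ cs => cs.map label

mutual
/-- Number of nodes of a tree. -/
def size : RTree α → ℕ
  | .node _ cs => 1 + sizeL cs
def sizeL : List (RTree α) → ℕ
  | [] => 0
  | c :: cs => size c + sizeL cs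
end

mutual
/-- `XML(t)`: the tag sequence of a depth-first traversal;
`(a, false)` is an opening tag, `(a, true)` a closing tag. -/
def xml : RTree α → List (α × Bool)
  | .node a cs => (a, false) :: (xmlL cs ++ [(a, true)])
def xmlL : List (RTree α) → List (α × Bool)
  | [] => []
  | c :: cs => xml c ++ xmlL cs
end

mutual
/-- XML tag sequence where each node is identified by its path
(list of child indices from the root). -/
def ptags : RTree α → List ℕ → List (List ℕ × Bool)
  | .node _ cs, p => (p, false) :: (ptagsL cs p 0 ++ [(p, true)])
def ptagsL : List (RTree α) → List ℕ → ℕ → List (List ℕ × Bool)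
  | [], _, _ => []
  | c :: cs, p, i => ptags c (p ++ [i]) ++ ptagsL cs p (i + 1)
end

/-- `XML(t)`, with nodes identified by their paths. -/
def tagList (t : RTree α) : List (List ℕ × Bool) := ptags t []

/-- `pos(v)`: (1-indexed) position of the opening tag of node `v` in `XML(t)`. -/
def posOpen (t : RTree α) (v : List ℕ) : ℕ := (tagList t).idxOf (v, false) + 1

/-- `pos(v̄)`: (1-indexed) position of the closing tag of node `v` in `XML(t)`. -/
def posClose (t : RTree α) (v : List ℕ) : ℕ := (tagList t).idxOf (v, true) + 1

/-- Subtree of `t` rooted at the node with path `p` (if any). -/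
def subtreeAt : RTree α → List ℕ → Option (RTree α)
  | t, [] => some t
  | .node _ cs, i :: p =>
    match cs[i]? with
    | some c => subtreeAt c p
    | none => none

/-- `p` is (the path of) a node of `t`. -/
def IsNode (t : RTree α) (p : List ℕ) : Prop := (subtreeAt t p).isSome

/-- First-child next-sibling encoding of a forest. -/
def fcnsL : List (RTree α) → BTree α
  | [] => .nil
  | .node a cs :: ts => .node a (fcnsL cs) (fcnsL ts)

/-- First-child next-sibling encoding `FCNS(t)`. -/
def fcns (t : RTree α) : BTree α := fcnsL [t]

/-- FCNS encoding of a forest, nodes identified by their paths in the original tree;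
`p` is the path of the parent, `i` the index of the first tree of the forest. -/
def pfcnsL : List (RTree α) → List ℕ → ℕ → BTree (List ℕ)
  | [], _, _ => .nil
  | .node _ cs :: ts, p, i =>
      .node (p ++ [i]) (pfcnsL cs (p ++ [i]) 0) (pfcnsL ts p (i + 1))

/-- `FCNS(t)`, with nodes identified by their paths in `t`. -/
def pfcns : RTree α → BTree (List ℕ)
  | .node _ cs => .node [] (pfcnsL cs [] 0) .nil

/-- `XML(FCNS(t))`, with nodes identified by their paths in `t`. -/
def btagList (t : RTree α) : List (List ℕ × Bool) := (pfcns t).btags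

/-- `pos'(v)`: position of the opening tag of `v` in `XML(FCNS(t))`. -/
def posOpen' (t : RTree α) (v : List ℕ) : ℕ := (btagList t).idxOf (v, false) + 1

/-- `pos'(v̄)`: position of the closing tag of `v` in `XML(FCNS(t))`. -/
def posClose' (t : RTree α) (v : List ℕ) : ℕ := (btagList t).idxOf (v, true) + 1

/-- A tree is valid against a DTD `D` if for every node, the word of labels of
its children belongs to `D` applied to the node's label. -/
def Valid (D : α → List α → Prop) (t : RTree α) : Prop :=
  ∀ p st, subtreeAt t p = some st → D st.label st.childLabels

end RTree

/-- `w` is a later sibling of `v` (as paths): same parent, larger last index. -/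
def LaterSib (w v : List ℕ) : Prop := ∃ q i j, v = q ++ [i] ∧ w = q ++ [j] ∧ i < j

/-! In `FCNS(t)` the children `v₁, …, v_k` of a node form a right spine `v₁ → v₂ → ⋯ → v_k`.
The closing tag of `vᵢ` is emitted right after the tags of its right subtree, which is the encoding
of the forest `vᵢ₊₁, …, v_k` and therefore ends with the closing tag of `vᵢ₊₁`. Nodes are identified
by their paths, which are pairwise distinct, so every tag occurs exactly once and positions are
well defined. -/

namespace List

theorem Nodup.idxOf_eq_succ_of_infix {β : Type} [BEq β] [LawfulBEq β] {l : List β} {x y : β}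
    (hn : l.Nodup) (h : [x, y] <:+: l) : l.idxOf y = l.idxOf x + 1 := by
  obtain ⟨A, B, rfl⟩ := h
  simp only [nodup_append, nodup_cons, mem_cons] at hn
  have hxA : x ∉ A := fun hx => by grind
  have hyA : y ∉ A ++ [x] := fun hy => by grind
  rw [show A ++ [x, y] ++ B = A ++ x :: y :: B by simp, idxOf_append_of_notMem hxA,
    show A ++ x :: y :: B = (A ++ [x]) ++ y :: B by simp, idxOf_append_of_notMem hyA]
  simp

end List

namespace BTree

theorem nodup_btags_node {β : Type} {a : β} {l r : BTree β} (hl : l.btags.Nodup)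
    (hr : r.btags.Nodup) (hla : ∀ x ∈ l.btags, x.1 ≠ a) (hra : ∀ x ∈ r.btags, x.1 ≠ a)
    (hlr : ∀ x ∈ l.btags, ∀ y ∈ r.btags, x.1 ≠ y.1) : (node a l r).btags.Nodup := by
  simp only [btags, List.nodup_cons, List.nodup_append, List.mem_append, List.mem_singleton]
  refine ⟨?_, ⟨hl, hr, fun x hx y hy hxy => hlr x hx y hy (congrArg Prod.fst hxy)⟩, by simp, ?_⟩
  · rintro ((hx | hx) | hx)
    · exact hla _ hx rfl
    · exact hra _ hx rfl
    · simp at hx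
  · rintro x (hx | hx) _ rfl rfl
    · exact hla _ hx rfl
    · exact hra _ hx rfl

end BTree

namespace RTree

variable {α : Type}

theorem exists_eq_append_cons_of_mem_btags_pfcnsL :
    ∀ {ts : List (RTree α)} {q : List ℕ} {j : ℕ} {x : List ℕ × Bool},
      x ∈ (pfcnsL ts q j).btags → ∃ m rest, x.1 = q ++ m :: rest ∧ j ≤ m
  | [], _, _, _, hx => by simp [pfcnsL, BTree.btags] at hx
  | .node _ cs :: ts, q, j, x, hx => by
    simp only [pfcnsL, BTree.btags, List.mem_cons, List.mem_append] at hx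
    rcases hx with rfl | (hx | hx) | hx
    · exact ⟨j, [], by simp, le_rfl⟩
    · obtain ⟨m, rest, hxm, -⟩ := exists_eq_append_cons_of_mem_btags_pfcnsL hx
      exact ⟨j, m :: rest, by simp [hxm], le_rfl⟩
    · obtain ⟨m, rest, hxm, hjm⟩ := exists_eq_append_cons_of_mem_btags_pfcnsL hx
      exact ⟨m, rest, hxm, by omega⟩
    · exact ⟨j, [], by simp_all, le_rfl⟩

theorem nodup_btags_pfcnsL :
    ∀ (ts : List (RTree α)) (q : List ℕ) (j : ℕ), (pfcnsL ts q j).btags.Nodup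
  | [], _, _ => by simp [pfcnsL, BTree.btags]
  | .node _ cs :: ts, q, j => by
    rw [pfcnsL]
    refine BTree.nodup_btags_node (nodup_btags_pfcnsL cs _ _) (nodup_btags_pfcnsL ts _ _)
      ?_ ?_ ?_
    · intro x hx
      obtain ⟨m, rest, hxm, -⟩ := exists_eq_append_cons_of_mem_btags_pfcnsL hx
      simp [hxm]
    · intro x hx
      obtain ⟨m, rest, hxm, hjm⟩ := exists_eq_append_cons_of_mem_btags_pfcnsL hx
      simp only [hxm, ne_eq, List.append_cancel_left_eq, List.cons.injEq]
      omega
    · intro x hx y hy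
      obtain ⟨m, rest, hxm, -⟩ := exists_eq_append_cons_of_mem_btags_pfcnsL hx
      obtain ⟨m', rest', hym, hjm'⟩ := exists_eq_append_cons_of_mem_btags_pfcnsL hy
      simp only [hxm, hym, List.append_assoc, List.cons_append, List.nil_append, ne_eq,
        List.append_cancel_left_eq, List.cons.injEq]
      omega

theorem closing_pair_infix_btags_pfcnsL :
    ∀ (ts : List (RTree α)) (q : List ℕ) (j i : ℕ), i + 1 < ts.length →
      [(q ++ [j + i + 1], true), (q ++ [j + i], true)] <:+: (pfcnsL ts q j).btags
  | [], _, _, _, h | [_], _, _, _, h => by simp at h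
  | .node _ cs :: .node _ cs' :: ts, q, j, 0, _ =>
    ⟨(q ++ [j], false) :: ((pfcnsL cs (q ++ [j]) 0).btags ++ (q ++ [j + 1], false) ::
      ((pfcnsL cs' (q ++ [j + 1]) 0).btags ++ (pfcnsL ts q (j + 1 + 1)).btags)), [],
      by simp [pfcnsL, BTree.btags]⟩
  | .node _ cs :: ts, q, j, i + 1, h => by
    have hrest := closing_pair_infix_btags_pfcnsL ts q (j + 1) i (by simpa using h)
    rw [show j + (i + 1) = j + 1 + i by omega, pfcnsL, BTree.btags]
    exact List.infix_cons (hrest.trans (List.infix_append _ _ _))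

theorem infix_btags_pfcnsL_of_getElem? :
    ∀ {ts : List (RTree α)} {q : List ℕ} {j idx : ℕ} {b : α} {cs : List (RTree α)},
      ts[idx]? = some (node b cs) →
        (pfcnsL cs (q ++ [j + idx]) 0).btags <:+: (pfcnsL ts q j).btags
  | [], _, _, _, _, _, h => by simp at h
  | .node _ _ :: _, q, j, 0, _, _, h => by
    obtain ⟨-, rfl⟩ := by simpa using h
    rw [pfcnsL, BTree.btags, Nat.add_zero, List.append_assoc]
    exact List.infix_cons (List.prefix_append _ _).isInfix
  | .node _ _ :: _, q, j, idx + 1, _, _, h => by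
    rw [show j + (idx + 1) = j + 1 + idx by omega, pfcnsL, BTree.btags]
    exact List.infix_cons
      ((infix_btags_pfcnsL_of_getElem? (by simpa using h)).trans (List.infix_append _ _ _))

theorem infix_btags_pfcnsL_of_subtreeAt :
    ∀ (p r : List ℕ) {b a : α} {ts cs : List (RTree α)},
      subtreeAt (node b ts) p = some (node a cs) →
        (pfcnsL cs (r ++ p) 0).btags <:+: (pfcnsL ts r 0).btags
  | [], r, _, _, _, _, h => by
    obtain ⟨-, rfl⟩ := by simpa [subtreeAt] using h
    simp
  | idx :: p, r, _, _, ts, _, h => by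
    simp only [subtreeAt] at h
    match hc : ts[idx]? with
    | none => simp [hc] at h
    | some (node b' ts') =>
      simp only [hc] at h
      have hsub := infix_btags_pfcnsL_of_subtreeAt p (r ++ [idx]) h
      simpa using hsub.trans (by simpa using infix_btags_pfcnsL_of_getElem? (j := 0) (q := r) hc)

theorem nodup_btagList (t : RTree α) : (btagList t).Nodup := by
  obtain ⟨b, ts⟩ := t
  refine BTree.nodup_btags_node (nodup_btags_pfcnsL ts [] 0) List.nodup_nil ?_
    (by simp [BTree.btags]) (by simp [BTree.btags])
  intro x hx
  obtain ⟨m, rest, hxm, -⟩ := exists_eq_append_cons_of_mem_btags_pfcnsL hx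
  simp [hxm]

theorem infix_btagList_of_subtreeAt {t : RTree α} {p : List ℕ} {a : α} {cs : List (RTree α)}
    (h : subtreeAt t p = some (node a cs)) : (pfcnsL cs p 0).btags <:+: btagList t := by
  obtain ⟨b, ts⟩ := t
  refine (infix_btags_pfcnsL_of_subtreeAt p [] h).trans (List.infix_cons ?_)
  simpa [BTree.btags] using (List.prefix_append _ _).isInfix

end RTree

/-- Children are 0-indexed: those of the node at path `p` are `p ++ [0], …, p ++ [k - 1]`. -/
theorem children_closing_consecutive {α : Type} (t : RTree α) (p : List ℕ)
    (a : α) (cs : List (RTree α)) (h : RTree.subtreeAt t p = some (.node a cs))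
    (hk : 1 ≤ cs.length) :
    ∀ i : ℕ, i + 1 < cs.length →
      RTree.posClose' t (p ++ [i]) = RTree.posClose' t (p ++ [i + 1]) + 1 := by
  intro i hi
  have hpair : [(p ++ [i + 1], true), (p ++ [i], true)] <:+: RTree.btagList t := by
    simpa using (RTree.closing_pair_infix_btags_pfcnsL cs p 0 i hi).trans
      (RTree.infix_btagList_of_subtreeAt h)
  simp only [RTree.posClose', (RTree.nodup_btagList t).idxOf_eq_succ_of_infix hpair]
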